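/- arXiv:2604.00165 — 3 statements merged into one kernel-verified Lean document; each statement's English description precedes it below -/
import Mathlib

section
/- With S m defined by S 1 = {0,1}, S 2 = {2}, odd step S m = ⋃_{c ∈ S(m-1)} {c-1,c,c+1}, and even step S(2k) = {2r : r ∈ S k, r ≡ k mod 2}, the maximum element of S m equals m for all m ≥ 1. -/
/-- Right-half support sets of Rule 22: `S 1 = {0,1}`, `S 2 = {2}`;
for odd `m ≥ 3`, thickening `S m = ⋃_{c ∈ S (m-1)} {c-1,c,c+1}`;
for even `m = 2k ≥ 4`, decimation `S m = {2r : r ∈ S k, r ≡ k [ZMOD 2]}`. -/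
def S : ℕ → Finset ℤ
  | 0 => ∅
  | 1 => {0, 1}
  | 2 => {2}
  | (m + 3) =>
    if (m + 3) % 2 = 1 then
      (S (m + 2)).biUnion (fun c => {c - 1, c, c + 1})
    else
      ((S ((m + 3) / 2)).filter
        (fun r => r % 2 = ((((m + 3) / 2 : ℕ) : ℤ)) % 2)).image (fun r => 2 * r)
  decreasing_by all_goals omega

/-- `popcount k`: the number of 1-bits in the binary expansion of `k`. -/
def popcount (k : ℕ) : ℕ := (Nat.digits 2 k).sum

lemma S_key : ∀ m : ℕ, 1 ≤ m → ((m : ℤ) ∈ S m ∧ ∀ x ∈ S m, x ≤ (m : ℤ)) := by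
  intro m
  induction m using Nat.strong_induction_on with
  | _ m ih =>
    match m with
    | 0 =>
      intro h
      omega
    | 1 =>
      intro _
      refine ⟨by simp [S], fun x hx => ?_⟩
      simp [S] at hx
      rcases hx with rfl | rfl <;> norm_num
    | 2 =>
      intro _
      refine ⟨by simp [S], fun x hx => ?_⟩
      simp [S] at hx
      omega
    | (n + 3) =>
      intro _
      rcases Nat.even_or_odd (n + 3) with he | ho
      · -- even case
        have hmod : (n + 3) % 2 = 0 := Nat.even_iff.mp he
        set k := (n + 3) / 2 with hk
        have hk2 : 2 ≤ k := by omega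
        have hkm : 2 * k = n + 3 := by omega
        have hS : S (n + 3) = ((S k).filter
            (fun r => r % 2 = ((k : ℤ)) % 2)).image (fun r => 2 * r) := by
          rw [S, if_neg (by omega)]
        obtain ⟨hmem, hbd⟩ := ih k (by omega) (by omega)
        constructor
        · rw [hS]
          refine Finset.mem_image.mpr ⟨(k : ℤ), Finset.mem_filter.mpr ⟨hmem, rfl⟩, ?_⟩
          push_cast; omega
        · intro x hx
          rw [hS] at hx
          obtain ⟨r, hr, hrx⟩ := Finset.mem_image.mp hx
          have := hbd r (Finset.mem_filter.mp hr).1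
          push_cast; omega
      · -- odd case
        have hmod : (n + 3) % 2 = 1 := Nat.odd_iff.mp ho
        have hS : S (n + 3) = (S (n + 2)).biUnion (fun c => {c - 1, c, c + 1}) := by
          rw [S, if_pos (by omega)]
        obtain ⟨hmem, hbd⟩ := ih (n + 2) (by omega) (by omega)
        constructor
        · rw [hS]
          refine Finset.mem_biUnion.mpr ⟨((n + 2 : ℕ) : ℤ), hmem, ?_⟩
          simp only [Finset.mem_insert, Finset.mem_singleton]
          right; right; push_cast; ring
        · intro x hx
          rw [hS] at hx
          obtain ⟨c, hc, hxc⟩ := Finset.mem_biUnion.mp hx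
          have := hbd c hc
          simp only [Finset.mem_insert, Finset.mem_singleton] at hxc
          push_cast
          rcases hxc with rfl | rfl | rfl <;> push_cast at this ⊢ <;> omega

/-- The maximum element of `S m` is `m` for all `m ≥ 1`. -/
theorem max_S (m : ℕ) (hm : 1 ≤ m) : (S m).max = ((m : ℤ) : WithBot ℤ) := by
  obtain ⟨hmem, hbd⟩ := S_key m hm
  apply le_antisymm
  · exact Finset.max_le fun x hx => WithBot.coe_le_coe.mpr (hbd x hx)
  · exact Finset.le_max hmem
end

section
/- With S m defined by the two-step recursion (S 1 = {0,1}, S 2 = {2}, odd step thickening by {c-1,c,c+1}, even step S(2k) = {2r : r ∈ S k, r ≡ k mod 2}), one has S(2^n) = {2^n} for every n ≥ 1. -/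
lemma S_even (m : ℕ) (hm : 4 ≤ m) (he : m % 2 = 0) :
    S m = ((S (m / 2)).filter
        (fun r => r % 2 = (((m / 2 : ℕ) : ℤ)) % 2)).image (fun r => 2 * r) := by
  obtain ⟨k, rfl⟩ : ∃ k, m = k + 3 := ⟨m - 3, by omega⟩
  rw [S]
  simp [he]

/-- At powers of two the support collapses to a singleton: `S (2^n) = {2^n}`. -/
theorem S_pow_two (n : ℕ) (hn : 1 ≤ n) : S (2 ^ n) = {((2 : ℤ) ^ n)} := by
  induction n with
  | zero => omega
  | succ n ih =>
    rcases Nat.eq_or_lt_of_le hn with h | h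
    · simp only [← h, pow_one]; rw [S]
    · have hn1 : 1 ≤ n := by omega
      have h4 : 4 ≤ 2 ^ (n + 1) := by
        calc (4 : ℕ) = 2 ^ 2 := rfl
        _ ≤ 2 ^ (n + 1) := Nat.pow_le_pow_right (by norm_num) (by omega)
      have he : 2 ^ (n + 1) % 2 = 0 := by
        simp [pow_succ, Nat.mul_mod_left]
      have hdiv : 2 ^ (n + 1) / 2 = 2 ^ n := by
        rw [pow_succ]; omega
      rw [S_even _ h4 he, hdiv, ih hn1]
      have he2 : ((2 : ℤ) ^ n) % 2 = 0 := by
        have : (2 : ℤ) ∣ 2 ^ n := dvd_pow_self 2 (by omega)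
        omega
      have : (((2 ^ n : ℕ) : ℤ)) % 2 = 0 := by push_cast; exact he2
      rw [Finset.filter_singleton]
      simp [he2, this, pow_succ, mul_comm]
end

section
/- The product x(1+x+x²)·∏_{j=2}^{n-1}(1+x^(2^j)) in 𝔽₂[X] has exactly 3·2^(n-2) nonzero coefficients for n ≥ 2. -/
open Polynomial Finset

lemma poly_support_add_eq {R : Type*} [Semiring R] (p q : R[X])
    (h : Disjoint p.support q.support) : (p + q).support = p.support ∪ q.support := by
  classical
  ext k
  simp only [mem_support_iff, coeff_add, Finset.mem_union]
  by_cases hp : p.coeff k = 0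
  · simp [hp]
  · have hq : q.coeff k = 0 := by
      by_contra hq
      exact (Finset.disjoint_left.mp h (mem_support_iff.mpr hp)) (mem_support_iff.mpr hq)
    simp [hp, hq]

lemma poly_support_mul_X_pow {R : Type*} [Semiring R] (p : R[X]) (m : ℕ) :
    (p * X ^ m).support = p.support.image (· + m) := by
  ext k
  simp only [mem_support_iff, coeff_mul_X_pow', Finset.mem_image]
  constructor
  · intro h
    split_ifs at h with hm
    · exact ⟨k - m, h, by omega⟩
    · simp at h
  · rintro ⟨a, ha, rfl⟩
    simpa [Nat.le_add_left, Nat.add_sub_cancel] using ha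

lemma card_support_mul_one_add_X_pow {R : Type*} [Semiring R] (p : R[X]) (m : ℕ)
    (hm : p.natDegree < m) :
    (p * (1 + X ^ m)).support.card = 2 * p.support.card := by
  have h1 : p * (1 + X ^ m) = p + p * X ^ m := by rw [mul_add, mul_one]
  have hdisj : Disjoint p.support (p * X ^ m).support := by
    rw [poly_support_mul_X_pow]
    rw [Finset.disjoint_left]
    intro k hk hk'
    obtain ⟨a, ha, rfl⟩ := Finset.mem_image.mp hk'
    have := le_natDegree_of_mem_supp _ hk
    omega
  rw [h1, poly_support_add_eq _ _ hdisj, Finset.card_union_of_disjoint hdisj,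
    poly_support_mul_X_pow, Finset.card_image_of_injective _ (add_left_injective m)]
  ring

lemma base_case : ((X * (1 + X + X ^ 2) : (ZMod 2)[X])).support = {1, 2, 3} := by
  have h : (X * (1 + X + X ^ 2) : (ZMod 2)[X]) = X + X ^ 2 + X ^ 3 := by ring
  rw [h]
  ext k
  simp only [mem_support_iff, coeff_add, coeff_X, coeff_X_pow, Finset.mem_insert,
    Finset.mem_singleton]
  rcases Nat.lt_or_ge k 4 with h4 | h4
  · interval_cases k <;> simp

  · have : ¬(1 = k) := by omega
    have h2 : ¬(k = 2) := by omega
    have h3 : ¬(k = 3) := by omega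
    simp [this, h2, h3]
    omega

/-- The Mersenne-index generating polynomial
`P(x) = x(1+x+x²)·∏_{j=2}^{n-1}(1+x^(2^j))` over `𝔽₂` has exactly `3·2^(n−2)`
nonzero coefficients for `n ≥ 2`. -/
theorem mersenne_poly_support_card (n : ℕ) (hn : 2 ≤ n) :
    (X * (1 + X + X ^ 2) *
        ∏ j ∈ Finset.Icc 2 (n - 1), (1 + X ^ (2 ^ j)) : (ZMod 2)[X]).support.card =
      3 * 2 ^ (n - 2) := by
  induction n, hn using Nat.le_induction with
  | base =>
    rw [show Finset.Icc 2 (2-1) = (∅ : Finset ℕ) from rfl, Finset.prod_empty, mul_one,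
      base_case]
    rfl
  | succ n hn ih =>
    have hIcc : Finset.Icc 2 (n + 1 - 1) = insert n (Finset.Icc 2 (n - 1)) := by
      ext k
      simp only [Finset.mem_Icc, Finset.mem_insert]
      omega
    have hnot : n ∉ Finset.Icc 2 (n - 1) := by simp; omega
    rw [hIcc, Finset.prod_insert hnot]
    have hre : (X * (1 + X + X ^ 2) *
        ((1 + X ^ 2 ^ n) * ∏ j ∈ Finset.Icc 2 (n - 1), (1 + X ^ 2 ^ j)) : (ZMod 2)[X]) =
        (X * (1 + X + X ^ 2) * ∏ j ∈ Finset.Icc 2 (n - 1), (1 + X ^ 2 ^ j)) *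
          (1 + X ^ 2 ^ n) := by ring
    rw [hre]
    have hdeg : (X * (1 + X + X ^ 2) *
        ∏ j ∈ Finset.Icc 2 (n - 1), (1 + X ^ 2 ^ j) : (ZMod 2)[X]).natDegree < 2 ^ n := by
      have h1 : (X * (1 + X + X ^ 2) : (ZMod 2)[X]).natDegree ≤ 3 := by
        compute_degree
      have h2 : (∏ j ∈ Finset.Icc 2 (n - 1), (1 + X ^ 2 ^ j) : (ZMod 2)[X]).natDegree ≤
          ∑ j ∈ Finset.Icc 2 (n - 1), 2 ^ j := by
        refine le_trans (natDegree_prod_le _ _) (Finset.sum_le_sum fun j _ => ?_)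
        compute_degree
      have h3 : ∑ j ∈ Finset.Icc 2 (n - 1), 2 ^ j ≤ 2 ^ n - 4 := by
        clear * - hn
        induction n, hn using Nat.le_induction with
        | base => simp
        | succ n hn ih =>
          have hIcc : Finset.Icc 2 (n + 1 - 1) = insert n (Finset.Icc 2 (n - 1)) := by
            ext k
            simp only [Finset.mem_Icc, Finset.mem_insert]
            omega
          have hnot : n ∉ Finset.Icc 2 (n - 1) := by simp; omega
          rw [hIcc, Finset.sum_insert hnot]
          have h4 : (4:ℕ) ≤ 2 ^ n := by
            calc (4:ℕ) = 2 ^ 2 := rfl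
            _ ≤ 2 ^ n := Nat.pow_le_pow_right (by norm_num) hn
          omega
      have := le_trans (natDegree_mul_le) (add_le_add h1 h2)
      have h4 : (4:ℕ) ≤ 2 ^ n := by
        calc (4:ℕ) = 2 ^ 2 := rfl
        _ ≤ 2 ^ n := Nat.pow_le_pow_right (by norm_num) hn
      omega
    rw [card_support_mul_one_add_X_pow _ _ hdeg, ih]
    have : n + 1 - 2 = (n - 2) + 1 := by omega
    rw [this, pow_succ]
    ring
end
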